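/- Let I be a set. For every embedding f : X → Y of finitary I-trees there exist a finitary I-tree Y' and two embeddings g, h : Y ⇉ Y' such that f is an equalizer of g and h in the category T_I. In particular, every morphism of T_I is a regular monomorphism, and it is the equalizer of all the pairs of morphisms that it equalizes. -/

import Mathlib

open CategoryTheory Limits Opposite

/-- A full binary tree: a type with a root and a child relation such that every node
has exactly zero or two children and every node is reached from the root by a unique
path. -/
structure BinTree : Type 1 where
  carrier : Type
  root : carrier
  child : carrier → carrier → Prop
  children_empty_or_pair : ∀ x : carrier,
    {y | child x y} = (∅ : Set carrier) ∨
    ∃ a b : carrier, a ≠ b ∧ {y | child x y} = {a, b}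
  unique_path : ∀ y : carrier, ∃! l : List carrier,
    l.Chain' child ∧ l.head? = some root ∧ l.getLast? = some y

namespace BinTree

/-- `f` is a branch of `T`: an infinite sequence starting at the root and following the
child relation. -/
def IsBranch (T : BinTree) (f : ℕ → T.carrier) : Prop :=
  f 0 = T.root ∧ ∀ n, T.child (f n) (f (n + 1))

/-- The type of branches of `T`. -/
def Branch (T : BinTree) : Type := {f : ℕ → T.carrier // T.IsBranch f}

/-- A node lies on a branch. -/
def OnBranch (T : BinTree) (x : T.carrier) : Prop :=
  ∃ (b : T.Branch) (n : ℕ), b.1 n = x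

end BinTree

/-- An `I`-tree: a full binary tree together with a partial labeling of its branches
by elements of `I`. -/
structure ITree (I : Type) extends BinTree where
  label : toBinTree.Branch → Option I

namespace ITree

variable {I : Type}

/-- An embedding of `I`-trees: an injective map preserving the root, reflecting and
preserving the child relation, and preserving the labels of branches. -/
structure Emb (X Y : ITree I) where
  toFun : X.carrier → Y.carrier
  inj : Function.Injective toFun
  map_root : toFun X.root = Y.root
  map_child : ∀ a b : X.carrier, X.child a b ↔ Y.child (toFun a) (toFun b)
  map_label : ∀ (b : X.toBinTree.Branch) (c : Y.toBinTree.Branch),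
    (∀ n, c.1 n = toFun (b.1 n)) → ∀ i : I, X.label b = some i → Y.label c = some i

theorem Emb.ext' {X Y : ITree I} {f g : Emb X Y} (h : f.toFun = g.toFun) : f = g := by
  cases f; cases g; cases h; rfl

/-- The image of a branch under an embedding. -/
def Emb.mapBranch {X Y : ITree I} (f : Emb X Y) (b : X.toBinTree.Branch) :
    Y.toBinTree.Branch :=
  ⟨fun n => f.toFun (b.1 n), by
    constructor
    · show f.toFun (b.1 0) = Y.root
      rw [b.2.1, f.map_root]
    · intro n
      exact (f.map_child _ _).1 (b.2.2 n)⟩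

/-- The identity embedding. -/
def idEmb (X : ITree I) : Emb X X where
  toFun := id
  inj := fun a b h => h
  map_root := rfl
  map_child := fun _ _ => Iff.rfl
  map_label := by
    intro b c hbc i hi
    have : c = b := Subtype.ext (funext fun n => hbc n)
    rw [this]
    exact hi

/-- Composition of embeddings. -/
def compEmb {X Y Z : ITree I} (f : Emb X Y) (g : Emb Y Z) : Emb X Z where
  toFun := g.toFun ∘ f.toFun
  inj := g.inj.comp f.inj
  map_root := by
    show g.toFun (f.toFun X.root) = Z.root
    rw [f.map_root, g.map_root]
  map_child := fun a b => (f.map_child a b).trans (g.map_child _ _)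
  map_label := by
    intro b c hbc i hi
    exact g.map_label (f.mapBranch b) c (fun n => hbc n) i
      (f.map_label b (f.mapBranch b) (fun _ => rfl) i hi)

/-- An `I`-tree is finitary if it has finitely many branches, finitely many nodes whose
parent lies on no branch, and a total labeling function. -/
def Finitary (X : ITree I) : Prop :=
  Finite X.toBinTree.Branch ∧
  Finite {x : X.carrier | ¬ ∃ p, X.child p x ∧ X.toBinTree.OnBranch p} ∧
  ∀ b, (X.label b).isSome

end ITree

/-- The category of `I`-trees and embeddings. -/
instance ITreeCat (I : Type) : Category (ITree I) where
  Hom := ITree.Emb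
  id := ITree.idEmb
  comp := ITree.compEmb
  id_comp f := ITree.Emb.ext' rfl
  comp_id f := ITree.Emb.ext' rfl
  assoc f g h := ITree.Emb.ext' rfl

/-- The category `T_I` of finitary `I`-trees and embeddings. -/
abbrev FinITree (I : Type) : Type 1 := ObjectProperty.FullSubcategory (ITree.Finitary (I := I))


namespace BinTree

variable (T : BinTree)

noncomputable def path (y : T.carrier) : List T.carrier := (T.unique_path y).choose

lemma path_spec (y : T.carrier) :
    (T.path y).Chain' T.child ∧ (T.path y).head? = some T.root ∧
      (T.path y).getLast? = some y :=
  (T.unique_path y).choose_spec.1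

lemma path_unique {y : T.carrier} {l : List T.carrier}
    (h : l.Chain' T.child ∧ l.head? = some T.root ∧ l.getLast? = some y) :
    l = T.path y :=
  (T.unique_path y).choose_spec.2 l h

lemma path_ne (y : T.carrier) : T.path y ≠ [] := by
  intro h
  have := (T.path_spec y).2.2
  rw [h] at this; simp at this

lemma path_root : T.path T.root = [T.root] :=
  (T.path_unique (l := [T.root]) (by simp [List.Chain', List.isChain_singleton])).symm

lemma path_child {p y : T.carrier} (h : T.child p y) :
    T.path y = T.path p ++ [y] := by
  refine (T.path_unique ⟨?_, ?_, ?_⟩).symm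
  · simp only [List.Chain', List.isChain_append]
    refine ⟨(T.path_spec p).1, List.isChain_singleton _, ?_⟩
    intro x hx z hz
    simp at hz
    rw [(T.path_spec p).2.2] at hx
    simp at hx
    rw [← hx, ← hz]; exact h
  · rw [List.head?_append, (T.path_spec p).2.1]; rfl
  · exact List.getLast?_concat

lemma root_no_parent {p : T.carrier} : ¬ T.child p T.root := by
  intro h
  have h2 := T.path_child h
  rw [T.path_root] at h2
  have h3 := congrArg List.length h2
  simp at h3
  exact T.path_ne p h3

lemma parent_unique {p q y : T.carrier} (hp : T.child p y) (hq : T.child q y) :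
    p = q := by
  have h1 := T.path_child hp
  have h2 := T.path_child hq
  have h3 : T.path p = T.path q := by
    have := h1.symm.trans h2
    exact List.append_inj_left' this rfl
  have e1 := (T.path_spec p).2.2
  have e2 := (T.path_spec q).2.2
  rw [h3, e2] at e1
  exact (Option.some_inj.mp e1).symm

lemma exists_parent {y : T.carrier} (h : y ≠ T.root) : ∃ p, T.child p y := by
  have hs := T.path_spec y
  have hne := T.path_ne y
  set l := T.path y with hl
  have hlast : l.getLast hne = y := by
    have h2 := hs.2.2
    rw [List.getLast?_eq_getLast hne, Option.some_inj] at h2; exact h2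
  have hdec : l.dropLast ++ [y] = l := by
    rw [← hlast]; exact List.dropLast_append_getLast hne
  have hdl : l.dropLast ≠ [] := by
    intro hd
    rw [hd, List.nil_append] at hdec
    have h2 := hs.2.1
    rw [← hdec] at h2
    simp at h2
    exact h h2
  refine ⟨l.dropLast.getLast hdl, ?_⟩
  have hc := hs.1
  rw [← hdec] at hc; simp only [List.Chain', List.isChain_append] at hc
  exact hc.2.2 _ (List.getLast?_eq_getLast hdl) y rfl

noncomputable def dep (y : T.carrier) : ℕ := (T.path y).length

lemma dep_child {p y : T.carrier} (h : T.child p y) : T.dep y = T.dep p + 1 := by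
  unfold dep
  rw [T.path_child h]
  simp

lemma node_ind (P : T.carrier → Prop) (hr : P T.root)
    (hc : ∀ p y, T.child p y → P p → P y) : ∀ y, P y := by
  have : ∀ n y, T.dep y = n → P y := by
    intro n
    induction n using Nat.strong_induction_on with
    | _ n ih =>
      intro y hy
      by_cases hyr : y = T.root
      · exact hyr ▸ hr
      · obtain ⟨p, hp⟩ := T.exists_parent hyr
        have hd := T.dep_child hp
        exact hc p y hp (ih (T.dep p) (by omega) p rfl)
  exact fun y => this (T.dep y) y rfl

end BinTree

namespace BinTree

variable (T : BinTree)

def Internal (y : T.carrier) : Prop := ∃ z, T.child y z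

lemma pair_of_internal {y : T.carrier} (h : T.Internal y) :
    ∃ a b, a ≠ b ∧ {z | T.child y z} = {a, b} := by
  rcases T.children_empty_or_pair y with h0 | h1
  · rcases h with ⟨z, hz⟩
    exfalso
    have : z ∈ {w | T.child y w} := hz
    rw [h0] at this
    exact this
  · exact h1

open Classical in
noncomputable def c0 (y : T.carrier) : T.carrier :=
  if h : T.Internal y then (T.pair_of_internal h).choose else y

open Classical in
noncomputable def c1 (y : T.carrier) : T.carrier :=
  if h : T.Internal y then (T.pair_of_internal h).choose_spec.choose else y

noncomputable def chl (y : T.carrier) (b : Bool) : T.carrier :=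
  if b then T.c1 y else T.c0 y

lemma children_spec {y : T.carrier} (h : T.Internal y) :
    T.c0 y ≠ T.c1 y ∧ {z | T.child y z} = {T.c0 y, T.c1 y} := by
  unfold c0 c1
  rw [dif_pos h, dif_pos h]
  exact (T.pair_of_internal h).choose_spec.choose_spec

lemma child_chl {y : T.carrier} (h : T.Internal y) (b : Bool) :
    T.child y (T.chl y b) := by
  have hs := (T.children_spec h).2
  have : T.chl y b ∈ {z | T.child y z} := by
    rw [hs]; cases b <;> simp [chl]
  exact this

lemma child_cases {y z : T.carrier} (h : T.child y z) :
    z = T.c0 y ∨ z = T.c1 y := by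
  have hi : T.Internal y := ⟨z, h⟩
  have hs := (T.children_spec hi).2
  have : z ∈ {w | T.child y w} := h
  rw [hs] at this
  exact this

open Classical in
noncomputable def bitOf (p y : T.carrier) : Bool :=
  if y = T.c1 p then true else false

lemma chl_bitOf {p y : T.carrier} (h : T.child p y) :
    T.chl p (T.bitOf p y) = y := by
  unfold bitOf
  by_cases h1 : y = T.c1 p
  · rw [if_pos h1]; simp [chl, h1]
  · rw [if_neg h1]
    rcases T.child_cases h with h0 | h0
    · simp [chl, h0]
    · exact absurd h0 h1

lemma bitOf_chl {y : T.carrier} (h : T.Internal y) (b : Bool) :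
    T.bitOf y (T.chl y b) = b := by
  have hne := (T.children_spec h).1
  cases b <;> simp [chl, bitOf, hne, Ne.symm hne]

noncomputable def parent (y : T.carrier) (h : y ≠ T.root) : T.carrier :=
  (T.exists_parent h).choose

lemma parent_spec (y : T.carrier) (h : y ≠ T.root) : T.child (T.parent y h) y :=
  (T.exists_parent h).choose_spec

lemma parent_eq {p y : T.carrier} (hc : T.child p y) (h : y ≠ T.root) :
    T.parent y h = p :=
  T.parent_unique (T.parent_spec y h) hc

lemma ne_root_of_child {p y : T.carrier} (hc : T.child p y) : y ≠ T.root := by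
  rintro rfl
  exact T.root_no_parent hc

open Classical in
noncomputable def addr (y : T.carrier) : List Bool :=
  if h : y = T.root then [] else
    addr (T.parent y h) ++ [T.bitOf (T.parent y h) y]
termination_by T.dep y
decreasing_by
  have := T.dep_child (T.parent_spec y h)
  omega

lemma addr_root : T.addr T.root = [] := by
  rw [addr, dif_pos rfl]

lemma addr_child {p y : T.carrier} (h : T.child p y) :
    T.addr y = T.addr p ++ [T.bitOf p y] := by
  have hy : y ≠ T.root := T.ne_root_of_child h
  rw [addr, dif_neg hy, T.parent_eq h hy]

lemma addr_eq_nil {y : T.carrier} (h : T.addr y = []) : y = T.root := by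
  by_contra hy
  rw [addr, dif_neg hy] at h
  simp at h

lemma addr_inj_aux : ∀ y z : T.carrier, T.addr y = T.addr z → y = z := by
  intro y
  induction y using T.node_ind with
  | hr =>
    intro z h
    exact (T.addr_eq_nil (by rw [← h, T.addr_root])).symm
  | hc p y hpy ih =>
    intro z h
    rw [T.addr_child hpy] at h
    have hz : z ≠ T.root := by
      rintro rfl
      rw [T.addr_root] at h
      simp at h
    rw [T.addr_child (T.parent_spec z hz)] at h
    obtain ⟨h1, h2⟩ := List.append_inj' h rfl
    have hp := ih _ h1
    have hb : T.bitOf p y = T.bitOf (T.parent z hz) z := by simpa using h2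
    calc y = T.chl p (T.bitOf p y) := (T.chl_bitOf hpy).symm
      _ = z := by rw [hb, hp, T.chl_bitOf (T.parent_spec z hz)]

lemma addr_inj : Function.Injective T.addr := fun _ _ h => T.addr_inj_aux _ _ h

lemma addr_child_rev {p y : T.carrier} {b : Bool}
    (h : T.addr y = T.addr p ++ [b]) : T.child p y ∧ T.chl p b = y := by
  have hy : y ≠ T.root := by
    intro hr
    rw [hr, T.addr_root] at h
    simp at h
  have h2 := T.addr_child (T.parent_spec y hy)
  rw [h2] at h
  obtain ⟨h1, h3⟩ := List.append_inj' h rfl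
  have hp : T.parent y hy = p := T.addr_inj h1
  have hc : T.child p y := hp ▸ T.parent_spec y hy
  have hb : T.bitOf (T.parent y hy) y = b := by simpa using h3
  have hl := T.chl_bitOf (T.parent_spec y hy)
  rw [hb, hp] at hl
  exact ⟨hc, hl⟩

lemma addr_chl {y : T.carrier} (h : T.Internal y) (b : Bool) :
    T.addr (T.chl y b) = T.addr y ++ [b] := by
  rw [T.addr_child (T.child_chl h b), T.bitOf_chl h b]

lemma take_addr (P : T.carrier → Prop) (hP : ∀ p y, T.child p y → P y → P p) :
    ∀ y, P y → ∀ n, ∃ z, P z ∧ T.addr z = (T.addr y).take n := by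
  intro y
  induction y using T.node_ind with
  | hr =>
    intro hPr n
    exact ⟨T.root, hPr, by rw [T.addr_root]; simp⟩
  | hc p y hpy ih =>
    intro hPy n
    rw [T.addr_child hpy]
    by_cases hn : n ≤ (T.addr p).length
    · rw [List.take_append_of_le_length hn]
      exact ih (hP _ _ hpy hPy) n
    · rw [List.take_of_length_le (by simp; omega)]
      exact ⟨y, hPy, T.addr_child hpy⟩

end BinTree

/-! Prefix lists of streams. -/

def pref (s : ℕ → Bool) (n : ℕ) : List Bool := (List.range n).map s

lemma pref_zero (s : ℕ → Bool) : pref s 0 = [] := rfl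

lemma pref_succ (s : ℕ → Bool) (n : ℕ) : pref s (n + 1) = pref s n ++ [s n] := by
  unfold pref
  rw [List.range_succ, List.map_append]
  rfl

lemma pref_length (s : ℕ → Bool) (n : ℕ) : (pref s n).length = n := by simp [pref]

lemma pref_take (s : ℕ → Bool) {m n : ℕ} (h : m ≤ n) :
    (pref s n).take m = pref s m := by
  unfold pref
  rw [← List.map_take, List.take_range, Nat.min_eq_left h]

lemma pref_inj {s t : ℕ → Bool} {m n : ℕ} (h : pref s n = pref t n) (hm : m < n) :
    s m = t m := by
  induction n with
  | zero => omega
  | succ k ih =>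
    rw [pref_succ, pref_succ] at h
    obtain ⟨h1, h2⟩ := List.append_inj' h rfl
    rcases Nat.lt_succ_iff_lt_or_eq.mp hm with h3 | h3
    · exact ih h1 h3
    · subst h3; simpa using h2

lemma stream_ext {s t : ℕ → Bool} (h : ∀ n, pref s n = pref t n) : s = t :=
  funext fun m => pref_inj (h (m + 1)) (Nat.lt_succ_self m)

namespace BinTree

variable (T : BinTree)

lemma branch_internal (b : T.Branch) (n : ℕ) : T.Internal (b.1 n) := ⟨_, b.2.2 n⟩

noncomputable def bstream (b : T.Branch) : ℕ → Bool :=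
  fun n => T.bitOf (b.1 n) (b.1 (n + 1))

lemma addr_branch (b : T.Branch) (n : ℕ) :
    T.addr (b.1 n) = pref (T.bstream b) n := by
  induction n with
  | zero => rw [b.2.1, T.addr_root, pref_zero]
  | succ k ih => rw [T.addr_child (b.2.2 k), ih, pref_succ]; rfl

lemma bstream_inj {b b' : T.Branch} (h : T.bstream b = T.bstream b') : b = b' := by
  apply Subtype.ext
  funext n
  apply T.addr_inj
  rw [T.addr_branch, T.addr_branch, h]

end BinTree

/-! A generic construction of `unique_path`. -/

lemma unique_path_of {α : Type} (root : α) (child : α → α → Prop)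
    (ht : α → ℕ)
    (hroot : ∀ p, ¬ child p root)
    (hpar : ∀ y, y = root ∨ ∃ p, child p y)
    (huniq : ∀ p q y, child p y → child q y → p = q)
    (hht : ∀ p y, child p y → ht y = ht p + 1) :
    ∀ y, ∃! l : List α, l.Chain' child ∧ l.head? = some root ∧ l.getLast? = some y := by
  have peel : ∀ (y : α) (l : List α), l.Chain' child → l.head? = some root →
      l.getLast? = some y →
      (y = root ∧ l = [root]) ∨
      (∃ p l', child p y ∧ l = l' ++ [y] ∧ l'.Chain' child ∧
        l'.head? = some root ∧ l'.getLast? = some p) := by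
    intro y l hc hh hl
    have hne : l ≠ [] := by rintro rfl; simp at hl
    have hlast : l.getLast hne = y := by
      rw [List.getLast?_eq_getLast hne, Option.some_inj] at hl; exact hl
    have hdec : l.dropLast ++ [y] = l := by
      rw [← hlast]; exact List.dropLast_append_getLast hne
    by_cases hd : l.dropLast = []
    · left
      rw [hd, List.nil_append] at hdec
      rw [← hdec] at hh
      simp at hh
      exact ⟨hh, by rw [← hdec, hh]⟩
    · right
      have hdec2 : l.dropLast.dropLast ++ [l.dropLast.getLast hd] = l.dropLast :=
        List.dropLast_append_getLast hd
      have hcc := hc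
      rw [← hdec] at hcc; simp only [List.Chain', List.isChain_append] at hcc
      have hch : child (l.dropLast.getLast hd) y :=
        hcc.2.2 _ (List.getLast?_eq_getLast hd) y rfl
      refine ⟨l.dropLast.getLast hd, l.dropLast, hch, hdec.symm, hcc.1, ?_, ?_⟩
      · rw [← hdec, List.head?_append] at hh
        cases he : l.dropLast.head? with
        | none => rw [List.head?_eq_none_iff] at he; exact absurd he hd
        | some a =>
          rw [he] at hh
          simp at hh
          rw [hh]
      · exact List.getLast?_eq_getLast hd
  have ex : ∀ (n : ℕ) (y : α), ht y = n →
      ∃ l : List α, l.Chain' child ∧ l.head? = some root ∧ l.getLast? = some y := by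
    intro n
    induction n using Nat.strong_induction_on with
    | _ n ih =>
      intro y hy
      rcases hpar y with hr | ⟨p, hp⟩
      · exact ⟨[y], List.isChain_singleton _, by simp [hr], rfl⟩
      · obtain ⟨l, hl1, hl2, hl3⟩ := ih (ht p) (by have := hht p y hp; omega) p rfl
        refine ⟨l ++ [y], ?_, ?_, List.getLast?_concat⟩
        · simp only [List.Chain', List.isChain_append]
          refine ⟨hl1, List.isChain_singleton _, ?_⟩
          intro a ha c hc
          rw [hl3] at ha
          simp at ha hc
          rw [← ha, ← hc]; exact hp
        · rw [List.head?_append, hl2]; rfl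
  have un : ∀ (n : ℕ) (y : α), ht y = n → ∀ l₁ l₂ : List α,
      (l₁.Chain' child ∧ l₁.head? = some root ∧ l₁.getLast? = some y) →
      (l₂.Chain' child ∧ l₂.head? = some root ∧ l₂.getLast? = some y) →
      l₁ = l₂ := by
    intro n
    induction n using Nat.strong_induction_on with
    | _ n ih =>
      intro y hy l₁ l₂ h₁ h₂
      rcases peel y l₁ h₁.1 h₁.2.1 h₁.2.2 with ⟨hy1, he1⟩ | ⟨p₁, l₁', hc1, he1, hp1⟩
      · rcases peel y l₂ h₂.1 h₂.2.1 h₂.2.2 with ⟨_, he2⟩ | ⟨p₂, l₂', hc2, _, _⟩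
        · rw [he1, he2]
        · exact absurd hc2 (hy1 ▸ hroot p₂)
      · rcases peel y l₂ h₂.1 h₂.2.1 h₂.2.2 with ⟨hy2, _⟩ | ⟨p₂, l₂', hc2, he2, hp2⟩
        · exact absurd hc1 (hy2 ▸ hroot p₁)
        · have hpp : p₁ = p₂ := huniq _ _ _ hc1 hc2
          have hl : l₁' = l₂' := by
            refine ih (ht p₁) (by have := hht p₁ y hc1; omega) p₁ rfl _ _ hp1 ?_
            rw [hpp]; exact hp2
          rw [he1, he2, hl]
  intro y
  obtain ⟨l, hl⟩ := ex (ht y) y rfl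
  exact ⟨l, hl, fun l' hl' => un (ht y) y rfl l' l hl' hl⟩

/-! Binary trees from sets of addresses. -/

def ofSet (S : Set (List Bool)) (hnil : [] ∈ S)
    (hpc : ∀ (w : List Bool) (b : Bool), w ++ [b] ∈ S → w ∈ S)
    (hfull : ∀ (w : List Bool) (b b' : Bool), w ++ [b] ∈ S → w ++ [b'] ∈ S) :
    BinTree where
  carrier := {w : List Bool // w ∈ S}
  root := ⟨[], hnil⟩
  child x y := ∃ b : Bool, y.1 = x.1 ++ [b]
  children_empty_or_pair := by
    intro x
    by_cases h : x.1 ++ [false] ∈ S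
    · right
      refine ⟨⟨x.1 ++ [false], h⟩, ⟨x.1 ++ [true], hfull _ _ _ h⟩, ?_, ?_⟩
      · intro he
        have := congrArg Subtype.val he
        simp at this
      · ext y
        simp only [Set.mem_setOf_eq, Set.mem_insert_iff, Set.mem_singleton_iff]
        constructor
        · rintro ⟨b, hb⟩
          cases b
          · left; exact Subtype.ext hb
          · right; exact Subtype.ext hb
        · rintro (rfl | rfl)
          · exact ⟨false, rfl⟩
          · exact ⟨true, rfl⟩
    · left
      ext y
      simp only [Set.mem_setOf_eq, Set.mem_empty_iff_false, iff_false]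
      rintro ⟨b, hb⟩
      have hy := y.2
      rw [hb] at hy
      exact h (hfull _ b false hy)
  unique_path := by
    apply unique_path_of _ _ (fun w => w.1.length)
    · rintro p ⟨b, hb⟩
      simp at hb
    · intro y
      by_cases hy : y.1 = []
      · left; exact Subtype.ext hy
      · right
        have hwb : y.1 = y.1.dropLast ++ [y.1.getLast hy] :=
          (List.dropLast_append_getLast hy).symm
        exact ⟨⟨y.1.dropLast, hpc _ _ (hwb ▸ y.2)⟩, y.1.getLast hy, hwb⟩
    · rintro p q y ⟨b, hb⟩ ⟨b', hb'⟩
      apply Subtype.ext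
      rw [hb] at hb'
      exact (List.append_inj' hb' rfl).1
    · rintro p y ⟨b, hb⟩
      rw [hb]
      simp

/-! The bit-flipping map determined by a set `F` of flip nodes. -/

open Classical in
noncomputable def psi (F : Set (List Bool)) (w : List Bool) : List Bool :=
  (List.range w.length).map
    (fun n => xor (w.getD n false) (if w.take n ∈ F then true else false))

open Classical in
noncomputable def psiSt (F : Set (List Bool)) (s : ℕ → Bool) : ℕ → Bool :=
  fun n => xor (s n) (if pref s n ∈ F then true else false)

lemma psi_nil (F : Set (List Bool)) : psi F [] = [] := rfl

lemma psi_length (F : Set (List Bool)) (w : List Bool) :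
    (psi F w).length = w.length := by simp [psi]

open Classical in
lemma psi_append (F : Set (List Bool)) (w : List Bool) (b : Bool) :
    psi F (w ++ [b]) = psi F w ++ [xor b (if w ∈ F then true else false)] := by
  unfold psi
  simp only [List.length_append, List.length_singleton]
  rw [List.range_succ, List.map_append]
  congr 1
  · apply List.map_congr_left
    intro n hn
    rw [List.mem_range] at hn
    rw [List.getD_append _ _ _ _ hn, List.take_append_of_le_length (le_of_lt hn)]
  · simp only [List.map_cons, List.map_nil]
    congr 2
    · rw [List.getD_append_right _ _ _ _ (le_refl _), Nat.sub_self]; rfl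
    · rw [List.take_left]

lemma psi_append' (F : Set (List Bool)) (w : List Bool) (b : Bool) :
    ∃ b' : Bool, psi F (w ++ [b]) = psi F w ++ [b'] := by
  classical
  exact ⟨_, psi_append F w b⟩

lemma psi_eq_nil {F : Set (List Bool)} {w : List Bool} (h : psi F w = []) :
    w = [] := by
  have := psi_length F w
  rw [h] at this
  exact List.length_eq_zero_iff.mp this.symm

lemma psi_inj (F : Set (List Bool)) : Function.Injective (psi F) := by
  intro w
  induction w using List.reverseRecOn with
  | nil => intro v h; exact (psi_eq_nil (by rw [← h, psi_nil])).symm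
  | append_singleton w b ih =>
    intro v h
    have hv : v ≠ [] := by
      rintro rfl
      rw [psi_nil] at h
      exact absurd (psi_eq_nil h) (by simp)
    have hvd : v = v.dropLast ++ [v.getLast hv] := (List.dropLast_append_getLast hv).symm
    rw [hvd, psi_append, psi_append] at h
    obtain ⟨h1, h2⟩ := List.append_inj' h rfl
    have hw : w = v.dropLast := ih h1
    rw [hvd, ← hw]
    congr 1
    simp only [List.cons.injEq, and_true] at h2
    rw [← hw] at h2
    have hx : ∀ a b c : Bool, xor a c = xor b c → a = b := by decide
    rw [hx _ _ _ h2]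

lemma psi_take (F : Set (List Bool)) (w : List Bool) (n : ℕ) :
    psi F (w.take n) = (psi F w).take n := by
  induction w using List.reverseRecOn with
  | nil => simp [psi_nil]
  | append_singleton w b ih =>
    by_cases hn : n ≤ w.length
    · rw [List.take_append_of_le_length hn, psi_append,
        List.take_append_of_le_length (by rw [psi_length]; exact hn), ih]
    · rw [List.take_of_length_le (by simp; omega),
        List.take_of_length_le (by rw [psi_length]; simp; omega)]

lemma psi_pref (F : Set (List Bool)) (s : ℕ → Bool) (n : ℕ) :
    psi F (pref s n) = pref (psiSt F s) n := by
  induction n with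
  | zero => rw [pref_zero, pref_zero, psi_nil]
  | succ k ih =>
    rw [pref_succ, pref_succ, psi_append, ih]
    rfl

lemma psi_eq_self_iff (F : Set (List Bool)) (w : List Bool) :
    psi F w = w ↔ ∀ n, n < w.length → w.take n ∉ F := by
  induction w using List.reverseRecOn with
  | nil => simp [psi_nil]
  | append_singleton w b ih =>
    rw [psi_append]
    constructor
    · intro h
      obtain ⟨h1, h2⟩ := List.append_inj' h rfl
      intro n hn
      simp only [List.length_append, List.length_singleton] at hn
      by_cases hnw : n < w.length
      · rw [List.take_append_of_le_length (le_of_lt hnw)]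
        exact ih.mp h1 n hnw
      · have : n = w.length := by omega
        rw [this, List.take_left]
        simp only [List.cons.injEq, and_true] at h2
        intro hF
        rw [if_pos hF] at h2
        simp at h2
    · intro h
      have h1 : psi F w = w := by
        apply ih.mpr
        intro n hn
        have := h n (by simp; omega)
        rwa [List.take_append_of_le_length (le_of_lt hn)] at this
      have h2 : w ∉ F := by
        have := h w.length (by simp)
        rwa [List.take_left] at this
      rw [h1, if_neg h2]
      simp

namespace Stmt16

open BinTree ITree

variable {I : Type} {X Y : ITree I}

/-- The address set of `Y`. -/
def A (Y : ITree I) : Set (List Bool) := Set.range Y.toBinTree.addr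

/-- The address hull: addresses of nodes in the range of `f`. -/
def R (f : X.Emb Y) : Set (List Bool) :=
  Y.toBinTree.addr '' (Set.range f.toFun)

variable (f : X.Emb Y)

lemma nil_mem_A : [] ∈ A Y := ⟨Y.toBinTree.root, Y.toBinTree.addr_root⟩

lemma nil_mem_R : [] ∈ R f :=
  ⟨Y.toBinTree.root, ⟨X.root, f.map_root⟩, Y.toBinTree.addr_root⟩

lemma R_subset_A : R f ⊆ A Y := by
  rintro w ⟨y, _, rfl⟩
  exact ⟨y, rfl⟩

lemma mem_R_iff (z : Y.carrier) :
    Y.toBinTree.addr z ∈ R f ↔ z ∈ Set.range f.toFun := by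
  constructor
  · rintro ⟨y, hy, hz⟩
    rwa [← Y.toBinTree.addr_inj hz]
  · intro h
    exact ⟨z, h, rfl⟩

lemma range_parent {p y : Y.carrier} (hc : Y.child p y)
    (hy : y ∈ Set.range f.toFun) : p ∈ Set.range f.toFun := by
  obtain ⟨x, rfl⟩ := hy
  have hxr : x ≠ X.root := by
    rintro rfl
    rw [f.map_root] at hc
    exact Y.toBinTree.root_no_parent hc
  obtain ⟨q, hq⟩ := X.toBinTree.exists_parent hxr
  have : Y.child (f.toFun q) (f.toFun x) := (f.map_child q x).mp hq
  rw [Y.toBinTree.parent_unique hc this]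
  exact ⟨q, rfl⟩

lemma range_full {y z z' : Y.carrier} (hz : Y.child y z) (hz' : Y.child y z')
    (hyr : y ∈ Set.range f.toFun) (hzr : z ∈ Set.range f.toFun) :
    z' ∈ Set.range f.toFun := by
  obtain ⟨x, rfl⟩ := hyr
  obtain ⟨x', rfl⟩ := hzr
  have hcx : X.child x x' := (f.map_child x x').mpr hz
  have hix : X.toBinTree.Internal x := ⟨x', hcx⟩
  have h0 : X.child x (X.toBinTree.c0 x) ∧ X.child x (X.toBinTree.c1 x) :=
    ⟨X.toBinTree.child_chl hix false, X.toBinTree.child_chl hix true⟩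
  have hy0 : Y.child (f.toFun x) (f.toFun (X.toBinTree.c0 x)) :=
    (f.map_child _ _).mp h0.1
  have hy1 : Y.child (f.toFun x) (f.toFun (X.toBinTree.c1 x)) :=
    (f.map_child _ _).mp h0.2
  have hne : f.toFun (X.toBinTree.c0 x) ≠ f.toFun (X.toBinTree.c1 x) := by
    intro he
    exact (X.toBinTree.children_spec hix).1 (f.inj he)
  rcases Y.toBinTree.child_cases hz' with h | h
  · rcases Y.toBinTree.child_cases hy0 with h0' | h0'
    · exact ⟨_, (h.trans h0'.symm).symm⟩
    · rcases Y.toBinTree.child_cases hy1 with h1' | h1'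
      · exact ⟨_, (h.trans h1'.symm).symm⟩
      · exact absurd (h0'.trans h1'.symm) hne
  · rcases Y.toBinTree.child_cases hy0 with h0' | h0'
    · rcases Y.toBinTree.child_cases hy1 with h1' | h1'
      · exact absurd (h0'.trans h1'.symm) hne
      · exact ⟨_, (h.trans h1'.symm).symm⟩
    · exact ⟨_, (h.trans h0'.symm).symm⟩

lemma A_take {w : List Bool} (hw : w ∈ A Y) (n : ℕ) : w.take n ∈ A Y := by
  obtain ⟨y, rfl⟩ := hw
  obtain ⟨z, _, hz⟩ := Y.toBinTree.take_addr (fun _ => True) (fun _ _ _ _ => trivial) y trivial n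
  exact ⟨z, hz⟩

lemma R_take {w : List Bool} (hw : w ∈ R f) (n : ℕ) : w.take n ∈ R f := by
  obtain ⟨y, hy, rfl⟩ := hw
  obtain ⟨z, hz, hz2⟩ := Y.toBinTree.take_addr (· ∈ Set.range f.toFun)
    (fun p y hc hy => range_parent f hc hy) y hy n
  exact ⟨z, hz, hz2⟩

lemma A_pc (w : List Bool) (b : Bool) (h : w ++ [b] ∈ A Y) : w ∈ A Y := by
  have := A_take h w.length
  rwa [List.take_left] at this

lemma A_full (w : List Bool) (b b' : Bool) (h : w ++ [b] ∈ A Y) :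
    w ++ [b'] ∈ A Y := by
  obtain ⟨p, hp⟩ := A_pc w b h
  obtain ⟨y, hy⟩ := h
  obtain ⟨hc, _⟩ := Y.toBinTree.addr_child_rev (p := p) (by rw [hy, hp])
  have hint : Y.toBinTree.Internal p := ⟨y, hc⟩
  exact ⟨Y.toBinTree.chl p b', by rw [Y.toBinTree.addr_chl hint, hp]⟩

/-- Boundary addresses: hull nodes whose children are outside the hull. -/
def Bdry : Set (List Bool) :=
  {v | v ∈ R f ∧ v ++ [false] ∈ A Y ∧ v ++ [false] ∉ R f ∧ v ++ [true] ∉ R f}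

/-- Every node outside the range has a boundary node strictly above it. -/
lemma bdry_cover : ∀ y : Y.carrier, y ∉ Set.range f.toFun →
    ∃ n, n < (Y.toBinTree.addr y).length ∧ (Y.toBinTree.addr y).take n ∈ Bdry f := by
  intro y
  induction y using Y.toBinTree.node_ind with
  | hr => intro h; exact absurd ⟨X.root, f.map_root⟩ h
  | hc p y hpy ih =>
    intro hy
    rw [Y.toBinTree.addr_child hpy]
    by_cases hp : p ∈ Set.range f.toFun
    · refine ⟨(Y.toBinTree.addr p).length, by simp, ?_⟩
      rw [List.take_left]
      have hint : Y.toBinTree.Internal p := ⟨y, hpy⟩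
      have hoff : ∀ b : Bool, Y.toBinTree.chl p b ∉ Set.range f.toFun := by
        intro b hb
        exact hy (range_full f (Y.toBinTree.child_chl hint b) hpy hp hb)
      refine ⟨⟨p, hp, rfl⟩, ?_, ?_, ?_⟩
      · exact ⟨Y.toBinTree.chl p false, Y.toBinTree.addr_chl hint false⟩
      · rw [← Y.toBinTree.addr_chl hint false, mem_R_iff]
        exact hoff false
      · rw [← Y.toBinTree.addr_chl hint true, mem_R_iff]
        exact hoff true
    · obtain ⟨n, hn, hmem⟩ := ih hp
      refine ⟨n, by simp; omega, ?_⟩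
      rwa [List.take_append_of_le_length (le_of_lt hn)]

end Stmt16

namespace Stmt16

open BinTree ITree

variable {I : Type} {X Y : ITree I} (f : X.Emb Y)

def OffHull (b : Y.toBinTree.Branch) : Prop := ∃ n, b.1 n ∉ Set.range f.toFun

lemma offhull_tail {b : Y.toBinTree.Branch} (hb : OffHull f b) :
    ∃ N, ∀ n, N ≤ n → b.1 n ∉ Set.range f.toFun := by
  obtain ⟨m, hm⟩ := hb
  refine ⟨m, fun n hn => ?_⟩
  induction n, hn using Nat.le_induction with
  | base => exact hm
  | succ n hmn ih =>
    intro hc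
    exact ih (range_parent f (b.2.2 n) hc)

lemma exists_enum (hY : Y.Finitary) :
    ∃ e : ℕ → Option Y.toBinTree.Branch,
      ∀ (b' : Y.toBinTree.Branch) (N : ℕ), ∃ n, N ≤ n ∧ e n = some b' := by
  classical
  haveI : Finite Y.toBinTree.Branch := hY.1
  by_cases h : Nonempty Y.toBinTree.Branch
  · haveI : Fintype Y.toBinTree.Branch := Fintype.ofFinite _
    have hk : 0 < Fintype.card Y.toBinTree.Branch := Fintype.card_pos_iff.mpr h
    refine ⟨fun n => some ((Fintype.equivFin _).symm ⟨n % _, Nat.mod_lt _ hk⟩),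
      fun b' N => ?_⟩
    refine ⟨N * Fintype.card Y.toBinTree.Branch + ((Fintype.equivFin _) b').1, ?_, ?_⟩
    · calc N ≤ N * Fintype.card Y.toBinTree.Branch := Nat.le_mul_of_pos_right N hk
        _ ≤ _ := Nat.le_add_right _ _
    · dsimp only
      congr 1
      rw [Equiv.symm_apply_eq]
      apply Fin.ext
      rw [Fin.val_mk, Nat.add_comm, Nat.add_mul_mod_self_right]
      exact Nat.mod_eq_of_lt (Fin.is_lt _)
  · exact ⟨fun _ => (none : Option Y.toBinTree.Branch),
      fun b' => absurd (Nonempty.intro b') h⟩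

lemma exists_DT (hY : Y.Finitary) : ∃ (D : ℕ) (tg : ℕ → Bool),
    (∀ b b' : Y.toBinTree.Branch, Y.toBinTree.bstream b ≠ Y.toBinTree.bstream b' →
      ∀ n, D ≤ n → pref (Y.toBinTree.bstream b) n ≠ pref (Y.toBinTree.bstream b') n) ∧
    (∀ b : Y.toBinTree.Branch, OffHull f b → ∀ n, D ≤ n → b.1 n ∉ Set.range f.toFun) ∧
    (∀ (b' : Y.toBinTree.Branch) (N : ℕ), ∃ n, N ≤ n ∧
      tg n = !(Y.toBinTree.bstream b' n)) := by
  classical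
  haveI : Finite Y.toBinTree.Branch := hY.1
  haveI : Fintype Y.toBinTree.Branch := Fintype.ofFinite _
  obtain ⟨e, he⟩ := exists_enum (Y := Y) hY
  set msep : Y.toBinTree.Branch × Y.toBinTree.Branch → ℕ := fun p =>
    if h : Y.toBinTree.bstream p.1 = Y.toBinTree.bstream p.2 then 0
    else (Function.ne_iff.mp h).choose + 1 with hmsep
  set mleave : Y.toBinTree.Branch → ℕ := fun b =>
    if h : OffHull f b then (offhull_tail f h).choose else 0 with hmleave
  refine ⟨(Finset.univ.sup msep) ⊔ (Finset.univ.sup mleave),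
    fun n => ((e n).map (fun b => !(Y.toBinTree.bstream b n))).getD false,
    ?_, ?_, ?_⟩
  · intro b b' hne n hn hpe
    have h1 : msep (b, b') ≤ n := by
      calc msep (b, b') ≤ Finset.univ.sup msep := Finset.le_sup (Finset.mem_univ _)
        _ ≤ _ := le_trans le_sup_left hn
    rw [hmsep] at h1
    simp only [dif_neg hne] at h1
    exact (Function.ne_iff.mp hne).choose_spec (pref_inj hpe (by omega))
  · intro b hb n hn
    have h1 : mleave b ≤ n := by
      calc mleave b ≤ Finset.univ.sup mleave := Finset.le_sup (Finset.mem_univ _)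
        _ ≤ _ := le_trans le_sup_right hn
    rw [hmleave] at h1
    simp only [dif_pos hb] at h1
    exact (offhull_tail f hb).choose_spec n h1
  · intro b' N
    obtain ⟨n, hn, hen⟩ := he b' N
    exact ⟨n, hn, by simp only [hen, Option.map_some, Option.getD_some]⟩

noncomputable def DD (hY : Y.Finitary) : ℕ := (exists_DT f hY).choose

noncomputable def tgt (hY : Y.Finitary) : ℕ → Bool :=
  (exists_DT f hY).choose_spec.choose

lemma DT_sep (hY : Y.Finitary) :
    ∀ b b' : Y.toBinTree.Branch, Y.toBinTree.bstream b ≠ Y.toBinTree.bstream b' →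
      ∀ n, DD f hY ≤ n →
        pref (Y.toBinTree.bstream b) n ≠ pref (Y.toBinTree.bstream b') n :=
  (exists_DT f hY).choose_spec.choose_spec.1

lemma DT_leave (hY : Y.Finitary) :
    ∀ b : Y.toBinTree.Branch, OffHull f b → ∀ n, DD f hY ≤ n →
      b.1 n ∉ Set.range f.toFun :=
  (exists_DT f hY).choose_spec.choose_spec.2.1

lemma DT_target (hY : Y.Finitary) :
    ∀ (b' : Y.toBinTree.Branch) (N : ℕ), ∃ n, N ≤ n ∧
      tgt f hY n = !(Y.toBinTree.bstream b' n) :=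
  (exists_DT f hY).choose_spec.choose_spec.2.2

def Ebad (hY : Y.Finitary) : Set (List Bool) :=
  {w | ∃ b : Y.toBinTree.Branch, OffHull f b ∧ DD f hY < w.length ∧
    w = pref (Y.toBinTree.bstream b) w.length ∧
    Y.toBinTree.bstream b w.length ≠ tgt f hY w.length}

def FF (hY : Y.Finitary) : Set (List Bool) := Bdry f ∪ Ebad f hY

lemma Ebad_off_R (hY : Y.Finitary) {w : List Bool} (hw : w ∈ Ebad f hY) :
    w ∉ R f := by
  obtain ⟨b, hoff, hlen, hpref, _⟩ := hw
  rw [hpref, ← Y.toBinTree.addr_branch, mem_R_iff]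
  exact DT_leave f hY b hoff _ (le_of_lt hlen)

lemma branch_hull_no_F (hY : Y.Finitary) (b : Y.toBinTree.Branch)
    (hb : ∀ n, b.1 n ∈ Set.range f.toFun) (n : ℕ) :
    pref (Y.toBinTree.bstream b) n ∉ FF f hY := by
  have hR : pref (Y.toBinTree.bstream b) n ∈ R f := by
    rw [← Y.toBinTree.addr_branch, mem_R_iff]; exact hb n
  rintro (hB | hE)
  · have hnext : pref (Y.toBinTree.bstream b) (n + 1) ∈ R f := by
      rw [← Y.toBinTree.addr_branch, mem_R_iff]; exact hb (n + 1)
    rw [pref_succ] at hnext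
    rcases Bool.eq_false_or_eq_true (Y.toBinTree.bstream b n) with hbit | hbit <;>
      rw [hbit] at hnext
    · exact hB.2.2.2 hnext
    · exact hB.2.2.1 hnext
  · exact Ebad_off_R f hY hE hR

open Classical in
lemma psiSt_offhull (hY : Y.Finitary) (b : Y.toBinTree.Branch) (hb : OffHull f b)
    (n : ℕ) (hn : DD f hY < n) :
    psiSt (FF f hY) (Y.toBinTree.bstream b) n = tgt f hY n := by
  have hpR : pref (Y.toBinTree.bstream b) n ∉ R f := by
    rw [← Y.toBinTree.addr_branch, mem_R_iff]
    exact DT_leave f hY b hb n (le_of_lt hn)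
  have hbd : pref (Y.toBinTree.bstream b) n ∉ Bdry f := fun h => hpR h.1
  unfold psiSt
  by_cases he : Y.toBinTree.bstream b n = tgt f hY n
  · have hEb : pref (Y.toBinTree.bstream b) n ∉ Ebad f hY := by
      rintro ⟨b₀, hb₀off, hlen, hpref, hne⟩
      rw [pref_length] at hlen hpref hne
      by_cases hss : Y.toBinTree.bstream b₀ = Y.toBinTree.bstream b
      · rw [hss] at hne; exact hne he
      · exact DT_sep f hY b₀ b hss n (le_of_lt hlen) hpref.symm
    have hFF : pref (Y.toBinTree.bstream b) n ∉ FF f hY := by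
      rintro (h | h); exacts [hbd h, hEb h]
    rw [if_neg hFF]
    simpa using he
  · have hEb : pref (Y.toBinTree.bstream b) n ∈ Ebad f hY :=
      ⟨b, hb, by rw [pref_length]; exact hn, by rw [pref_length], by rw [pref_length]; exact he⟩
    rw [if_pos (show pref (Y.toBinTree.bstream b) n ∈ FF f hY from Or.inr hEb)]
    revert he
    cases Y.toBinTree.bstream b n <;> cases tgt f hY n <;> simp

lemma no_collision (hY : Y.Finitary) {b b' : Y.toBinTree.Branch}
    (h : psiSt (FF f hY) (Y.toBinTree.bstream b) = Y.toBinTree.bstream b') :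
    (∀ n, b.1 n ∈ Set.range f.toFun) ∧ b' = b := by
  have hhull : ∀ n, b.1 n ∈ Set.range f.toFun := by
    by_contra hc
    push_neg at hc
    have hb : OffHull f b := hc
    obtain ⟨n, hn, ht⟩ := DT_target f hY b' (DD f hY + 1)
    have h1 : Y.toBinTree.bstream b' n = tgt f hY n := by
      rw [← h]
      exact psiSt_offhull f hY b hb n (by omega)
    rw [ht] at h1
    simp at h1
  have hfix : psiSt (FF f hY) (Y.toBinTree.bstream b) = Y.toBinTree.bstream b := by
    funext n
    unfold psiSt
    rw [if_neg (branch_hull_no_F f hY b hhull n)]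
    simp
  refine ⟨hhull, Y.toBinTree.bstream_inj (by rw [← h, hfix])⟩

open Classical in
lemma psi_addr_eq_iff (hY : Y.Finitary) (y : Y.carrier) :
    psi (FF f hY) (Y.toBinTree.addr y) = Y.toBinTree.addr y ↔
      y ∈ Set.range f.toFun := by
  rw [psi_eq_self_iff]
  constructor
  · intro h
    by_contra hy
    obtain ⟨n, hn, hmem⟩ := bdry_cover f y hy
    exact h n hn (Or.inl hmem)
  · rintro hy n hn hF
    have htak : (Y.toBinTree.addr y).take n ∈ R f := R_take f ⟨y, hy, rfl⟩ n
    rcases hF with hB | hE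
    · have h1 : (Y.toBinTree.addr y).take (n + 1) ∈ R f := R_take f ⟨y, hy, rfl⟩ (n + 1)
      have h2 : (Y.toBinTree.addr y).take (n + 1)
          = (Y.toBinTree.addr y).take n ++ [(Y.toBinTree.addr y).get ⟨n, hn⟩] := by
        rw [List.take_succ, List.getElem?_eq_getElem hn]
        rfl
      rw [h2] at h1
      rcases Bool.eq_false_or_eq_true ((Y.toBinTree.addr y).get ⟨n, hn⟩) with hb | hb <;>
        rw [hb] at h1
      · exact hB.2.2.2 h1
      · exact hB.2.2.1 h1
    · exact Ebad_off_R f hY hE htak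

end Stmt16

section OfSetLemmas

variable {S : Set (List Bool)} {h1 : [] ∈ S}
  {h2 : ∀ (w : List Bool) (b : Bool), w ++ [b] ∈ S → w ∈ S}
  {h3 : ∀ (w : List Bool) (b b' : Bool), w ++ [b] ∈ S → w ++ [b'] ∈ S}

lemma ofSet_child {x y : (ofSet S h1 h2 h3).carrier} :
    (ofSet S h1 h2 h3).child x y ↔ ∃ b : Bool, y.1 = x.1 ++ [b] := Iff.rfl

lemma ofSet_root : ((ofSet S h1 h2 h3).root).1 = [] := rfl

lemma ofSet_branch_zero (c : (ofSet S h1 h2 h3).Branch) : (c.1 0).1 = [] :=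
  congrArg Subtype.val c.2.1

lemma ofSet_branch_succ (c : (ofSet S h1 h2 h3).Branch) (n : ℕ) :
    ∃ b : Bool, (c.1 (n + 1)).1 = (c.1 n).1 ++ [b] := c.2.2 n

lemma ofSet_branch_length (c : (ofSet S h1 h2 h3).Branch) (n : ℕ) :
    (c.1 n).1.length = n := by
  induction n with
  | zero => rw [ofSet_branch_zero]; rfl
  | succ k ih =>
    obtain ⟨b, hb⟩ := ofSet_branch_succ c k
    rw [hb]
    simp [ih]

lemma ofSet_branch_take (c : (ofSet S h1 h2 h3).Branch) {n m : ℕ} (h : n ≤ m) :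
    (c.1 m).1.take n = (c.1 n).1 := by
  induction m, h using Nat.le_induction with
  | base => exact List.take_of_length_le (le_of_eq (ofSet_branch_length c n))
  | succ m hnm ih =>
    obtain ⟨b, hb⟩ := ofSet_branch_succ c m
    rw [hb, List.take_append_of_le_length (by rw [ofSet_branch_length]; exact hnm), ih]

end OfSetLemmas

namespace Stmt16

open BinTree ITree

variable {I : Type} {X Y : ITree I} (f : X.Emb Y)

def A' (hY : Y.Finitary) : Set (List Bool) := A Y ∪ (psi (FF f hY) '' A Y)

lemma A'_nil (hY : Y.Finitary) : [] ∈ A' f hY := Or.inl nil_mem_A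

lemma A'_pc (hY : Y.Finitary) :
    ∀ (w : List Bool) (b : Bool), w ++ [b] ∈ A' f hY → w ∈ A' f hY := by
  rintro w b (h | ⟨v, hv, hpsi⟩)
  · exact Or.inl (A_pc w b h)
  · have hvne : v ≠ [] := by
      rintro rfl
      rw [psi_nil] at hpsi
      simp at hpsi
    have hps : psi (FF f hY) (v.dropLast ++ [v.getLast hvne]) = w ++ [b] := by
      rw [List.dropLast_append_getLast hvne]; exact hpsi
    rw [psi_append] at hps
    obtain ⟨hps1, _⟩ := List.append_inj' hps rfl
    refine Or.inr ⟨v.dropLast, ?_, hps1⟩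
    apply A_pc _ (v.getLast hvne)
    rw [List.dropLast_append_getLast hvne]
    exact hv

lemma A'_full (hY : Y.Finitary) :
    ∀ (w : List Bool) (b b' : Bool), w ++ [b] ∈ A' f hY → w ++ [b'] ∈ A' f hY := by
  rintro w b b' (h | ⟨v, hv, hpsi⟩)
  · exact Or.inl (A_full w b b' h)
  · have hvne : v ≠ [] := by
      rintro rfl
      rw [psi_nil] at hpsi
      simp at hpsi
    have hvA : v.dropLast ++ [v.getLast hvne] ∈ A Y := by
      rw [List.dropLast_append_getLast hvne]; exact hv
    have hps : psi (FF f hY) (v.dropLast ++ [v.getLast hvne]) = w ++ [b] := by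
      rw [List.dropLast_append_getLast hvne]; exact hpsi
    rw [psi_append] at hps
    obtain ⟨hps1, hps2⟩ := List.append_inj' hps rfl
    simp only [List.cons.injEq, and_true] at hps2
    set c := v.getLast hvne
    have hbool : ∀ cc bb bb' tt : Bool, xor cc tt = bb →
        xor (xor cc (xor bb bb')) tt = bb' := by decide
    refine Or.inr ⟨v.dropLast ++ [xor c (xor b b')], A_full _ c _ hvA, ?_⟩
    rw [psi_append, hps1, hbool c b b' _ hps2]

noncomputable def Ybin' (hY : Y.Finitary) : BinTree :=
  ofSet (A' f hY) (A'_nil f hY) (A'_pc f hY) (A'_full f hY)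

noncomputable def gfun (hY : Y.Finitary) (y : Y.carrier) : (Ybin' f hY).carrier :=
  ⟨Y.toBinTree.addr y, Or.inl ⟨y, rfl⟩⟩

noncomputable def hfun (hY : Y.Finitary) (y : Y.carrier) : (Ybin' f hY).carrier :=
  ⟨psi (FF f hY) (Y.toBinTree.addr y), Or.inr ⟨_, ⟨y, rfl⟩, rfl⟩⟩

noncomputable def gBr (hY : Y.Finitary) (b : Y.toBinTree.Branch) :
    (Ybin' f hY).Branch :=
  ⟨fun n => gfun f hY (b.1 n), by
    constructor
    · apply Subtype.ext
      show Y.toBinTree.addr (b.1 0) = []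
      rw [b.2.1, Y.toBinTree.addr_root]
    · intro n
      exact ⟨Y.toBinTree.bitOf (b.1 n) (b.1 (n + 1)),
        Y.toBinTree.addr_child (b.2.2 n)⟩⟩

noncomputable def hBr (hY : Y.Finitary) (b : Y.toBinTree.Branch) :
    (Ybin' f hY).Branch :=
  ⟨fun n => hfun f hY (b.1 n), by
    constructor
    · apply Subtype.ext
      show psi (FF f hY) (Y.toBinTree.addr (b.1 0)) = []
      rw [b.2.1, Y.toBinTree.addr_root, psi_nil]
    · intro n
      obtain ⟨b', hb'⟩ := psi_append' (FF f hY) (Y.toBinTree.addr (b.1 n))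
        (Y.toBinTree.bitOf (b.1 n) (b.1 (n + 1)))
      refine ⟨b', ?_⟩
      show psi (FF f hY) (Y.toBinTree.addr (b.1 (n+1)))
        = psi (FF f hY) (Y.toBinTree.addr (b.1 n)) ++ [b']
      rw [Y.toBinTree.addr_child (b.2.2 n), hb']⟩

lemma branch_of_A (hY : Y.Finitary) (c : (Ybin' f hY).Branch)
    (hA : ∀ n, (c.1 n).1 ∈ A Y) :
    ∃ b : Y.toBinTree.Branch, ∀ n, (c.1 n).1 = Y.toBinTree.addr (b.1 n) := by
  have hy : ∀ n, Y.toBinTree.addr ((hA n).choose) = (c.1 n).1 := fun n => (hA n).choose_spec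
  refine ⟨⟨fun n => (hA n).choose, ?_, ?_⟩, fun n => (hy n).symm⟩
  · apply Y.toBinTree.addr_eq_nil
    rw [hy 0]
    exact ofSet_branch_zero c
  · intro n
    obtain ⟨bit, hbit⟩ := ofSet_branch_succ c n
    have : Y.toBinTree.addr ((hA (n+1)).choose)
        = Y.toBinTree.addr ((hA n).choose) ++ [bit] := by
      rw [hy, hy, ← hbit]
    exact (Y.toBinTree.addr_child_rev this).1

lemma branch_of_psi (hY : Y.Finitary) (c : (Ybin' f hY).Branch)
    (hA : ∀ n, (c.1 n).1 ∈ psi (FF f hY) '' A Y) :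
    ∃ b : Y.toBinTree.Branch, ∀ n, (c.1 n).1 = psi (FF f hY) (Y.toBinTree.addr (b.1 n)) := by
  have hv : ∀ n, (hA n).choose ∈ A Y ∧ psi (FF f hY) ((hA n).choose) = (c.1 n).1 :=
    fun n => ⟨(hA n).choose_spec.1, (hA n).choose_spec.2⟩
  set v : ℕ → List Bool := fun n => (hA n).choose with hvdef
  have hvlen : ∀ n, (v n).length = n := by
    intro n
    have := congrArg List.length (hv n).2
    rw [psi_length] at this
    exact this.trans (ofSet_branch_length c n)
  have hvchain : ∀ n, ∃ bit : Bool, v (n + 1) = v n ++ [bit] := by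
    intro n
    have hne : v (n + 1) ≠ [] := by
      intro h
      have := hvlen (n + 1)
      rw [h] at this
      simp at this
    obtain ⟨bit, hbit⟩ := ofSet_branch_succ c n
    have hps : psi (FF f hY) ((v (n+1)).dropLast ++ [(v (n+1)).getLast hne])
        = psi (FF f hY) (v n) ++ [bit] := by
      rw [List.dropLast_append_getLast hne, (hv (n+1)).2, hbit, (hv n).2]
    rw [psi_append] at hps
    obtain ⟨hps1, _⟩ := List.append_inj' hps rfl
    have : (v (n+1)).dropLast = v n := psi_inj _ hps1
    exact ⟨(v (n+1)).getLast hne, by rw [← this, List.dropLast_append_getLast hne]⟩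
  have hyA : ∀ n, ∃ y, Y.toBinTree.addr y = v n := fun n => (hv n).1
  have hy : ∀ n, Y.toBinTree.addr ((hyA n).choose) = v n := fun n => (hyA n).choose_spec
  refine ⟨⟨fun n => (hyA n).choose, ?_, ?_⟩, fun n => ?_⟩
  · apply Y.toBinTree.addr_eq_nil
    rw [hy 0]
    exact List.length_eq_zero_iff.mp (hvlen 0)
  · intro n
    obtain ⟨bit, hbit⟩ := hvchain n
    have : Y.toBinTree.addr ((hyA (n+1)).choose)
        = Y.toBinTree.addr ((hyA n).choose) ++ [bit] := by
      rw [hy, hy, ← hbit]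
    exact (Y.toBinTree.addr_child_rev this).1
  · rw [hy n]
    exact ((hv n).2).symm

lemma branch_case (hY : Y.Finitary) (c : (Ybin' f hY).Branch) :
    (∃ b : Y.toBinTree.Branch, ∀ n, (c.1 n).1 = Y.toBinTree.addr (b.1 n)) ∨
    (∃ b : Y.toBinTree.Branch, ∀ n, (c.1 n).1 = psi (FF f hY) (Y.toBinTree.addr (b.1 n))) := by
  by_cases hA : ∀ n, (c.1 n).1 ∈ A Y
  · exact Or.inl (branch_of_A f hY c hA)
  · push_neg at hA
    obtain ⟨m, hm⟩ := hA
    refine Or.inr (branch_of_psi f hY c ?_)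
    have hpm : ∀ n, m ≤ n → (c.1 n).1 ∈ psi (FF f hY) '' A Y := by
      intro n hn
      rcases (c.1 n).2 with h | h
      · exfalso
        apply hm
        have := A_take h m
        rwa [ofSet_branch_take c hn] at this
      · exact h
    intro n
    by_cases hn : m ≤ n
    · exact hpm n hn
    · obtain ⟨v, hvA, hvpsi⟩ := hpm m (le_refl m)
      refine ⟨v.take n, A_take hvA n, ?_⟩
      rw [psi_take, hvpsi, ofSet_branch_take c (le_of_not_ge hn)]

lemma rep_g_inj (hY : Y.Finitary) {b b' : Y.toBinTree.Branch}
    (h : ∀ n, Y.toBinTree.addr (b.1 n) = Y.toBinTree.addr (b'.1 n)) : b = b' :=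
  Subtype.ext (funext fun n => Y.toBinTree.addr_inj (h n))

lemma rep_g_h (hY : Y.Finitary) {b b' : Y.toBinTree.Branch}
    (h : ∀ n, psi (FF f hY) (Y.toBinTree.addr (b.1 n)) = Y.toBinTree.addr (b'.1 n)) :
    b' = b ∧ ∀ n, b.1 n ∈ Set.range f.toFun := by
  have hst : psiSt (FF f hY) (Y.toBinTree.bstream b) = Y.toBinTree.bstream b' := by
    apply stream_ext
    intro n
    rw [← psi_pref, ← Y.toBinTree.addr_branch, ← Y.toBinTree.addr_branch]
    exact h n
  obtain ⟨h1, h2⟩ := no_collision f hY hst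
  exact ⟨h2, h1⟩

end Stmt16

namespace Stmt16

open BinTree ITree

variable {I : Type} {X Y : ITree I} (f : X.Emb Y)

open Classical in
noncomputable def label' (hY : Y.Finitary) : (Ybin' f hY).Branch → Option I := fun c =>
  if hc : ∃ b : Y.toBinTree.Branch, ∀ n, (c.1 n).1 = Y.toBinTree.addr (b.1 n) then
    Y.label hc.choose
  else if hc' : ∃ b : Y.toBinTree.Branch,
      ∀ n, (c.1 n).1 = psi (FF f hY) (Y.toBinTree.addr (b.1 n)) then
    Y.label hc'.choose
  else none

noncomputable def Y' (hY : Y.Finitary) : ITree I :=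
  { toBinTree := Ybin' f hY, label := label' f hY }

lemma gfun_child (hY : Y.Finitary) {p y : Y.carrier} (h : Y.child p y) :
    (Ybin' f hY).child (gfun f hY p) (gfun f hY y) :=
  ⟨_, Y.toBinTree.addr_child h⟩

lemma hfun_child (hY : Y.Finitary) {p y : Y.carrier} (h : Y.child p y) :
    (Ybin' f hY).child (hfun f hY p) (hfun f hY y) := by
  obtain ⟨b', hb'⟩ := psi_append' (FF f hY) (Y.toBinTree.addr p) (Y.toBinTree.bitOf p y)
  refine ⟨b', ?_⟩
  show psi (FF f hY) (Y.toBinTree.addr y) = psi (FF f hY) (Y.toBinTree.addr p) ++ [b']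
  rw [Y.toBinTree.addr_child h, hb']

lemma fin_branch (hY : Y.Finitary) : Finite (Ybin' f hY).Branch := by
  classical
  haveI : Finite Y.toBinTree.Branch := hY.1
  apply Finite.of_injective (f := fun c : (Ybin' f hY).Branch =>
    if hc : ∃ b : Y.toBinTree.Branch, ∀ n, (c.1 n).1 = Y.toBinTree.addr (b.1 n)
    then ((hc.choose : Y.toBinTree.Branch), true)
    else (((branch_case f hY c).resolve_left hc).choose, false))
  intro c c' he
  have hval : ∀ (d d' : (Ybin' f hY).Branch), (∀ n, (d.1 n).1 = (d'.1 n).1) → d = d' := by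
    intro d d' hdd
    exact Subtype.ext (funext fun n => Subtype.ext (hdd n))
  dsimp only at he
  by_cases hc : ∃ b : Y.toBinTree.Branch, ∀ n, (c.1 n).1 = Y.toBinTree.addr (b.1 n) <;>
    by_cases hc' : ∃ b : Y.toBinTree.Branch, ∀ n, (c'.1 n).1 = Y.toBinTree.addr (b.1 n)
  · rw [dif_pos hc, dif_pos hc'] at he
    have hb : hc.choose = hc'.choose := (Prod.mk.injEq _ _ _ _).mp he |>.1
    apply hval
    intro n
    rw [hc.choose_spec n, hc'.choose_spec n, hb]
  · rw [dif_pos hc, dif_neg hc'] at he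
    exact absurd ((Prod.mk.injEq _ _ _ _).mp he).2 (by simp)
  · rw [dif_neg hc, dif_pos hc'] at he
    exact absurd ((Prod.mk.injEq _ _ _ _).mp he).2 (by simp)
  · rw [dif_neg hc, dif_neg hc'] at he
    have hb := ((Prod.mk.injEq _ _ _ _).mp he).1
    apply hval
    intro n
    rw [((branch_case f hY c).resolve_left hc).choose_spec n,
      ((branch_case f hY c').resolve_left hc').choose_spec n, hb]

lemma label'_total (hY : Y.Finitary) (c : (Ybin' f hY).Branch) :
    (label' f hY c).isSome := by
  classical
  unfold label'
  by_cases hc : ∃ b : Y.toBinTree.Branch, ∀ n, (c.1 n).1 = Y.toBinTree.addr (b.1 n)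
  · rw [dif_pos hc]
    exact hY.2.2 _
  · rw [dif_neg hc, dif_pos ((branch_case f hY c).resolve_left hc)]
    exact hY.2.2 _

lemma fin_offbranch (hY : Y.Finitary) :
    Finite {x : (Ybin' f hY).carrier |
      ¬ ∃ p, (Ybin' f hY).child p x ∧ (Ybin' f hY).OnBranch p} := by
  classical
  have hBadY : ({y : Y.carrier | ¬ ∃ p, Y.child p y ∧ Y.toBinTree.OnBranch p}).Finite :=
    Set.finite_coe_iff.mp hY.2.1
  rw [Set.finite_coe_iff]
  apply Set.Finite.subset ((hBadY.image (gfun f hY)).union (hBadY.image (hfun f hY)))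
  intro x hx
  rcases x.2 with hA | ⟨v, hvA, hvpsi⟩
  · obtain ⟨y, hy⟩ := hA
    have hxg : x = gfun f hY y := Subtype.ext hy.symm
    left
    refine ⟨y, ?_, hxg.symm⟩
    intro ⟨p, hp, β, n, hβ⟩
    apply hx
    refine ⟨gfun f hY p, by rw [hxg]; exact gfun_child f hY hp, gBr f hY β, n, ?_⟩
    show gfun f hY (β.1 n) = gfun f hY p
    rw [hβ]
  · obtain ⟨y, hy⟩ := hvA
    have hxh : x = hfun f hY y := by
      apply Subtype.ext
      show x.1 = psi (FF f hY) (Y.toBinTree.addr y)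
      rw [hy, hvpsi]
    right
    refine ⟨y, ?_, hxh.symm⟩
    intro ⟨p, hp, β, n, hβ⟩
    apply hx
    refine ⟨hfun f hY p, by rw [hxh]; exact hfun_child f hY hp, hBr f hY β, n, ?_⟩
    show hfun f hY (β.1 n) = hfun f hY p
    rw [hβ]

lemma Y'_finitary (hY : Y.Finitary) : (Y' f hY).Finitary :=
  ⟨fin_branch f hY, fin_offbranch f hY, label'_total f hY⟩

end Stmt16

namespace Stmt16

open BinTree ITree

variable {I : Type} {X Y : ITree I} (f : X.Emb Y)

noncomputable def gEmb (hY : Y.Finitary) : Y.Emb (Y' f hY) where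
  toFun := gfun f hY
  inj := fun a b h => Y.toBinTree.addr_inj (congrArg Subtype.val h)
  map_root := Subtype.ext Y.toBinTree.addr_root
  map_child := by
    intro a b
    constructor
    · exact fun h => gfun_child f hY h
    · rintro ⟨bit, hb⟩
      exact (Y.toBinTree.addr_child_rev (p := a) hb).1
  map_label := by
    classical
    intro b c hbc i hi
    show label' f hY c = some i
    have hcg : ∀ n, (c.1 n).1 = Y.toBinTree.addr (b.1 n) :=
      fun n => congrArg Subtype.val (hbc n)
    have hex : ∃ b₀ : Y.toBinTree.Branch, ∀ n, (c.1 n).1 = Y.toBinTree.addr (b₀.1 n) :=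
      ⟨b, hcg⟩
    unfold label'
    rw [dif_pos hex]
    have hbb : hex.choose = b := by
      apply rep_g_inj hY
      intro n
      rw [← hex.choose_spec n, hcg n]
    rw [hbb]
    exact hi

noncomputable def hEmb (hY : Y.Finitary) : Y.Emb (Y' f hY) where
  toFun := hfun f hY
  inj := fun a b h =>
    Y.toBinTree.addr_inj (psi_inj _ (congrArg Subtype.val h))
  map_root := Subtype.ext (by
    show psi (FF f hY) (Y.toBinTree.addr Y.toBinTree.root) = []
    rw [Y.toBinTree.addr_root, psi_nil])
  map_child := by
    intro a b
    constructor
    · exact fun h => hfun_child f hY h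
    · rintro ⟨bit, hb⟩
      have hb' : psi (FF f hY) (Y.toBinTree.addr b)
          = psi (FF f hY) (Y.toBinTree.addr a) ++ [bit] := hb
      have hbne : b ≠ Y.toBinTree.root := by
        intro hr
        rw [hr, Y.toBinTree.addr_root, psi_nil] at hb'
        simp at hb'
      have hp := Y.toBinTree.addr_child (Y.toBinTree.parent_spec b hbne)
      obtain ⟨bit2, hps0⟩ := psi_append' (FF f hY)
        (Y.toBinTree.addr (Y.toBinTree.parent b hbne))
        (Y.toBinTree.bitOf (Y.toBinTree.parent b hbne) b)
      have hps : psi (FF f hY) (Y.toBinTree.addr b)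
          = psi (FF f hY) (Y.toBinTree.addr (Y.toBinTree.parent b hbne)) ++ [bit2] := by
        rw [hp, hps0]
      rw [hps] at hb'
      obtain ⟨h1, _⟩ := List.append_inj' hb' rfl
      have : Y.toBinTree.parent b hbne = a := Y.toBinTree.addr_inj (psi_inj _ h1)
      rw [← this]
      exact Y.toBinTree.parent_spec b hbne
  map_label := by
    classical
    intro b c hbc i hi
    show label' f hY c = some i
    have hch : ∀ n, (c.1 n).1 = psi (FF f hY) (Y.toBinTree.addr (b.1 n)) :=
      fun n => congrArg Subtype.val (hbc n)
    unfold label'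
    by_cases hcg : ∃ b₀ : Y.toBinTree.Branch, ∀ n, (c.1 n).1 = Y.toBinTree.addr (b₀.1 n)
    · rw [dif_pos hcg]
      have heq : ∀ n, psi (FF f hY) (Y.toBinTree.addr (b.1 n))
          = Y.toBinTree.addr (hcg.choose.1 n) := by
        intro n
        rw [← hch n, hcg.choose_spec n]
      obtain ⟨hbb, _⟩ := rep_g_h f hY heq
      rw [hbb]
      exact hi
    · have hex : ∃ b₀ : Y.toBinTree.Branch,
          ∀ n, (c.1 n).1 = psi (FF f hY) (Y.toBinTree.addr (b₀.1 n)) := ⟨b, hch⟩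
      rw [dif_neg hcg, dif_pos hex]
      have hbb : hex.choose = b := by
        apply rep_g_inj hY
        intro n
        apply psi_inj (FF f hY)
        rw [← hex.choose_spec n, hch n]
      rw [hbb]
      exact hi

lemma gh_eq_on_range (hY : Y.Finitary) (x : X.carrier) :
    gfun f hY (f.toFun x) = hfun f hY (f.toFun x) :=
  Subtype.ext ((psi_addr_eq_iff f hY (f.toFun x)).mpr ⟨x, rfl⟩).symm

lemma gh_agree (hY : Y.Finitary) {y : Y.carrier}
    (h : gfun f hY y = hfun f hY y) : y ∈ Set.range f.toFun :=
  (psi_addr_eq_iff f hY y).mp (congrArg Subtype.val h).symm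

lemma factor (hX : X.Finitary) {W : ITree I} (u : W.Emb Y)
    (hu : ∀ w, u.toFun w ∈ Set.range f.toFun) :
    ∃ t : W.Emb X, ∀ w, f.toFun (t.toFun w) = u.toFun w := by
  classical
  choose t ht using hu
  refine ⟨⟨t, ?_, ?_, ?_, ?_⟩, ht⟩
  · intro a b h
    apply u.inj
    rw [← ht a, ← ht b, h]
  · apply f.inj
    rw [ht, u.map_root, f.map_root]
  · intro a b
    rw [u.map_child a b, ← ht a, ← ht b, ← f.map_child]
  · intro bW c hbc i hi
    obtain ⟨j, hj⟩ := Option.isSome_iff_exists.mp (hX.2.2 c)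
    have h2 := f.map_label c (f.mapBranch c) (fun _ => rfl) j hj
    have h3 := u.map_label bW (u.mapBranch bW) (fun _ => rfl) i hi
    have h4 : f.mapBranch c = u.mapBranch bW := by
      apply Subtype.ext
      funext n
      show f.toFun (c.1 n) = u.toFun (bW.1 n)
      rw [hbc n, ht]
    rw [h4, h3] at h2
    rw [hj]
    injection h2 with h5
    rw [h5]

end Stmt16

/-- STATEMENT 16: every embedding `f : X → Y` of finitary `I`-trees is the equalizer of
a pair of embeddings `g, h : Y ⇉ Y'`; in particular it is a regular monomorphism and it
is the equalizer of all the pairs of morphisms it equalizes. -/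
theorem stmt16 (I : Type) {X Y : FinITree I} (f : X ⟶ Y) :
    (∃ (Y' : FinITree I) (g h : Y ⟶ Y') (w : f ≫ g = f ≫ h),
      Nonempty (IsLimit (Fork.ofι f w))) ∧
    Nonempty (RegularMono f) ∧
    (∀ (W : FinITree I) (u : W ⟶ Y),
      (∀ (Z : FinITree I) (g h : Y ⟶ Z), f ≫ g = f ≫ h → u ≫ g = u ≫ h) →
      ∃! t : W ⟶ X, t ≫ f = u) := by
  classical
  have hX := X.property
  have hY := Y.property
  let Yobj' : FinITree I := ⟨Stmt16.Y' f.hom hY, Stmt16.Y'_finitary f.hom hY⟩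
  let g : Y ⟶ Yobj' := ⟨Stmt16.gEmb f.hom hY⟩
  let h : Y ⟶ Yobj' := ⟨Stmt16.hEmb f.hom hY⟩
  have hw : f ≫ g = f ≫ h :=
    ObjectProperty.hom_ext _ (ITree.Emb.ext' (funext fun x => Stmt16.gh_eq_on_range f.hom hY x))
  have key : ∀ (W : FinITree I) (u : W ⟶ Y), u ≫ g = u ≫ h →
      ∃ t : W ⟶ X, t ≫ f = u := by
    intro W u hu
    have hu' : ∀ w : W.obj.carrier, u.hom.toFun w ∈ Set.range f.hom.toFun := by
      intro w
      apply Stmt16.gh_agree f.hom hY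
      exact congrFun (congrArg (fun k => k.hom.toFun) hu) w
    obtain ⟨t, ht⟩ := Stmt16.factor f.hom hX u.hom hu'
    exact ⟨⟨t⟩, ObjectProperty.hom_ext _ (ITree.Emb.ext' (funext ht))⟩
  have hmono : ∀ {W : FinITree I} (t₁ t₂ : W ⟶ X), t₁ ≫ f = t₂ ≫ f → t₁ = t₂ := by
    intro W t₁ t₂ hss
    apply ObjectProperty.hom_ext
    apply ITree.Emb.ext'
    funext w
    apply f.hom.inj
    exact congrFun (congrArg (fun k => k.hom.toFun) hss) w
  have hlim : IsLimit (Fork.ofι f hw) := by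
    apply Fork.IsLimit.mk (Fork.ofι f hw)
      (fun s => (key s.pt s.ι s.condition).choose)
    · intro s
      exact (key s.pt s.ι s.condition).choose_spec
    · intro s m hm
      exact hmono m _ (hm.trans (key s.pt s.ι s.condition).choose_spec.symm)
  refine ⟨⟨Yobj', g, h, hw, ⟨hlim⟩⟩, ⟨⟨Yobj', g, h, hw, hlim⟩⟩, ?_⟩
  intro W u hu
  obtain ⟨t, ht⟩ := key W u (hu Yobj' g h hw)
  exact ⟨t, ht, fun t' ht' => hmono t' t (ht'.trans ht.symm)⟩
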